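/- arXiv:2210.08686 — 4 statements merged into one kernel-verified Lean document; each statement's English description precedes it below -/
import Mathlib

section
/- Let (φ_j)_{j≥1} be a sequence of functions ℝ → ℝ such that each φ_j lies in H¹₀(0,1) with derivative g_j, the family is orthonormal in L²(0,1) (∫₀¹ φ_i φ_j dx = δ_{ij} for all i, j ≥ 1), and the sequence of kinetic energies is non-decreasing, i.e. ∫₀¹ g_j² dx ≤ ∫₀¹ g_{j+1}² dx for all j ≥ 1. Then for every j ≥ 1 one has ∫₀¹ g_j(x)² dx ≥ π² j² / 3 (equivalently, the L²(0,1)-norm of g_j is at least π j / √3). -/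
/-!
Let `a i k` be the coefficient of `φ i` on `√2 sin (kπx)`. Integration by parts turns the
coefficients of `g i` on `√2 cos (kπx)` into `kπ a i k`, so Bessel's inequality for the cosine
system gives `∫ (g i)² ≥ π² ∑ₖ k² (a i k)²`. Parseval's identity for the sine system (the Fourier
series of the odd extension to `(-1, 1)`) gives `∑ₖ (a i k)² = 1`, while Bessel's inequality for
the orthonormal family `φ 1, …, φ J` gives `dₖ := ∑_{i ≤ J} (a i k)² ≤ 1`. Masses `dₖ ∈ [0, 1]`
of total mass `J` placed against the increasing weights `k²` cost at least `∑_{k ≤ J} k²`, whence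
`∑_{i ≤ J} ∫ (g i)² ≥ π² J(J+1)(2J+1)/6`; monotonicity bounds the left side by `J ∫ (g J)²`.
-/

open MeasureTheory

/-- `φ` lies in `H¹₀(0,1)` with derivative `g`. -/
def InH10 (φ g : ℝ → ℝ) : Prop :=
  Measurable g ∧ IntegrableOn (fun t => g t ^ 2) (Set.Ioo 0 1) ∧
    (∀ x ∈ Set.Icc (0:ℝ) 1, φ x = ∫ t in (0:ℝ)..x, g t) ∧ φ 1 = 0

open Real Set

theorem integral_cos_int_mul_pi_mul_eq_zero {j : ℤ} (hj : j ≠ 0) :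
    ∫ x in (0:ℝ)..1, cos (j * π * x) = 0 := by
  have hjπ : (j : ℝ) * π ≠ 0 := mul_ne_zero (Int.cast_ne_zero.mpr hj) pi_ne_zero
  rw [intervalIntegral.integral_comp_mul_left (fun x => cos x) hjπ, integral_cos, mul_zero,
    mul_one, sin_int_mul_pi, sin_zero, sub_zero, smul_zero]

theorem integral_cos_nat_mul_pi_mul_cos {m n : ℕ} (hn : n ≠ 0) :
    ∫ x in (0:ℝ)..1, cos (m * π * x) * cos (n * π * x) = if m = n then 1 / 2 else 0 := by
  have hprod : ∀ x : ℝ, cos (m * π * x) * cos (n * π * x) =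
      (cos (((m - n : ℤ) : ℝ) * π * x) + cos (((m + n : ℤ) : ℝ) * π * x)) / 2 := by
    intro x
    push_cast
    rw [show ((m:ℝ) - n) * π * x = m * π * x - n * π * x by ring,
      show ((m:ℝ) + n) * π * x = m * π * x + n * π * x by ring, cos_sub, cos_add]
    ring
  have hmn : (m + n : ℤ) ≠ 0 := by omega
  simp_rw [hprod]
  rw [intervalIntegral.integral_div, intervalIntegral.integral_add
    ((by fun_prop : Continuous _).intervalIntegrable _ _)
    ((by fun_prop : Continuous _).intervalIntegrable _ _),
    integral_cos_int_mul_pi_mul_eq_zero hmn]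
  split_ifs with h
  · subst h; simp
  · rw [integral_cos_int_mul_pi_mul_eq_zero (by omega)]; simp

theorem integral_sin_nat_mul_pi_mul_sq {k : ℕ} (hk : k ≠ 0) :
    ∫ x in (0:ℝ)..1, sin (k * π * x) ^ 2 = 1 / 2 := by
  have h := integral_cos_nat_mul_pi_mul_cos (m := k) hk
  rw [if_pos rfl] at h
  simp only [← sq] at h
  simp_rw [sin_sq]
  rw [intervalIntegral.integral_sub
    ((by fun_prop : Continuous _).intervalIntegrable _ _)
    ((by fun_prop : Continuous _).intervalIntegrable _ _), h]
  norm_num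

theorem Complex.exp_neg_mul_I_sub_exp_mul_I (θ : ℂ) :
    exp (-θ * I) - exp (θ * I) = -2 * I * sin θ := by
  rw [sin]
  ring_nf
  rw [I_sq]
  ring

theorem MeasureTheory.MemLp.inner_toLp {α : Type*} [MeasurableSpace α] {μ : Measure α}
    {f g : α → ℝ} (hf : MemLp f 2 μ) (hg : MemLp g 2 μ) :
    inner ℝ (hf.toLp f) (hg.toLp g) = ∫ x, f x * g x ∂μ := by
  rw [L2.inner_def]
  refine integral_congr_ae ?_
  filter_upwards [hf.coeFn_toLp, hg.coeFn_toLp] with x hfx hgx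
  rw [hfx, hgx, real_inner_eq_re_inner, RCLike.inner_apply, conj_trivial, mul_comm]
  rfl

theorem sum_sq_integral_mul_le_integral_sq {α ι : Type*} [MeasurableSpace α] [DecidableEq ι]
    {μ : Measure α} {e : ι → α → ℝ} {s : Finset ι} (he : ∀ i ∈ s, MemLp (e i) 2 μ)
    (horth : ∀ i ∈ s, ∀ j ∈ s, ∫ x, e i x * e j x ∂μ = if i = j then 1 else 0)
    {f : α → ℝ} (hf : MemLp f 2 μ) :
    ∑ i ∈ s, (∫ x, e i x * f x ∂μ) ^ 2 ≤ ∫ x, f x ^ 2 ∂μ := by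
  let v : s → Lp ℝ 2 μ := fun i => (he i i.2).toLp
  have hv : Orthonormal ℝ v := by
    rw [orthonormal_iff_ite]
    intro i j
    simp only [v, MemLp.inner_toLp, horth i i.2 j j.2, Subtype.ext_iff]
  have hbessel := hv.sum_inner_products_le (s := Finset.univ) (hf.toLp f)
  simp only [v, MemLp.inner_toLp, Real.norm_eq_abs, sq_abs, ← real_inner_self_eq_norm_sq]
    at hbessel
  rw [← Finset.sum_coe_sort s]
  simpa only [← sq] using hbessel

theorem ContinuousOn.memLp_restrict_Ioo {f : ℝ → ℝ} {a b : ℝ} (hf : ContinuousOn f (Icc a b))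
    (p : ENNReal) : MemLp f p (volume.restrict (Ioo a b)) := by
  obtain ⟨C, hC⟩ := isCompact_Icc.exists_bound_of_continuousOn hf
  exact .of_bound ((hf.mono Ioo_subset_Icc_self).aestronglyMeasurable measurableSet_Ioo) C
    (ae_restrict_of_forall_mem measurableSet_Ioo fun x hx => hC x (Ioo_subset_Icc_self hx))

theorem integral_Ioo_eq_intervalIntegral {E : Type*} [NormedAddCommGroup E] [NormedSpace ℝ E]
    {f : ℝ → E} {a b : ℝ} (hab : a ≤ b) : ∫ x in Ioo a b, f x = ∫ x in a..b, f x := by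
  rw [intervalIntegral.integral_of_le hab, integral_Ioc_eq_integral_Ioo]

theorem intervalIntegral.integral_primitive_mul_deriv {g f f' : ℝ → ℝ} {a b : ℝ}
    (hg : IntervalIntegrable g volume a b) (hf : ∀ x, HasDerivAt f (f' x) x)
    (hf' : Continuous f') :
    ∫ x in a..b, (∫ t in a..x, g t) * f' x =
      (∫ t in a..b, g t) * f b - ∫ x in a..b, g x * f x := by
  have hderiv : deriv f = f' := funext fun x => (hf x).deriv
  have hfac : AbsolutelyContinuousOnInterval f a b :=
    (contDiff_one_iff_deriv.mpr ⟨fun x => (hf x).differentiableAt, hderiv ▸ hf'⟩).contDiffOn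
      |>.absolutelyContinuousOnInterval
  have hibp := (hg.absolutelyContinuousOnInterval_intervalIntegral left_mem_uIcc)
    |>.integral_mul_deriv_eq_deriv_mul hfac
  rw [hderiv] at hibp
  rw [hibp, intervalIntegral.integral_same, zero_mul, sub_zero]
  congr 1
  refine intervalIntegral.integral_congr_ae ?_
  filter_upwards [hg.ae_hasDerivAt_integral] with x hx hxab
  rw [(hx (uIoc_subset_uIcc hxab) a left_mem_uIcc).deriv]

theorem intervalIntegral.integral_from_neg_eq_integral_add_comp_neg {E : Type*}
    [NormedAddCommGroup E] [NormedSpace ℝ E] {f : ℝ → E} {a : ℝ}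
    (hf : IntervalIntegrable f volume (-a) a) :
    ∫ x in -a..a, f x = ∫ x in 0..a, (f x + f (-x)) := by
  have h0 : (0:ℝ) ∈ uIcc (-a) a := by rcases le_total 0 a with h | h <;> simp [h]
  have hleft : IntervalIntegrable f volume (-a) 0 := hf.mono_set (uIcc_subset_uIcc_left h0)
  have hright : IntervalIntegrable f volume 0 a := hf.mono_set (uIcc_subset_uIcc_right h0)
  have hleft' : IntervalIntegrable (fun x => f (-x)) volume 0 a := by
    simpa using ((IntervalIntegrable.iff_comp_neg).mp hleft).symm
  rw [← intervalIntegral.integral_add_adjacent_intervals hleft hright,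
    intervalIntegral.integral_add hright hleft', add_comm,
    intervalIntegral.integral_comp_neg, neg_zero]

noncomputable def sineCoeff (f : ℝ → ℝ) (k : ℕ) : ℝ :=
  ∫ x in Ioo 0 1, f x * sin (k * π * x)

noncomputable def cosineCoeff (f : ℝ → ℝ) (k : ℕ) : ℝ :=
  ∫ x in Ioo 0 1, f x * cos (k * π * x)

theorem sum_two_mul_cosineCoeff_sq_le {g : ℝ → ℝ} (hg : MemLp g 2 (volume.restrict (Ioo 0 1)))
    (K : ℕ) :
    ∑ k ∈ Finset.range K, 2 * cosineCoeff g (k + 1) ^ 2 ≤ ∫ x in Ioo 0 1, g x ^ 2 := by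
  let e : ℕ → ℝ → ℝ := fun k x => √2 * cos ((k + 1 : ℕ) * π * x)
  have he : ∀ k, MemLp (e k) 2 (volume.restrict (Ioo 0 1)) := fun k =>
    (by fun_prop : Continuous (e k)).continuousOn.memLp_restrict_Ioo 2
  have horth : ∀ i j, ∫ x in Ioo 0 1, e i x * e j x = if i = j then 1 else 0 := by
    intro i j
    have hprod : ∀ x, e i x * e j x =
        2 * (cos ((i + 1 : ℕ) * π * x) * cos ((j + 1 : ℕ) * π * x)) :=
      fun x => by simp only [e]; ring_nf; rw [sq_sqrt zero_le_two]; ring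
    simp only [hprod, integral_Ioo_eq_intervalIntegral zero_le_one,
      intervalIntegral.integral_const_mul, integral_cos_nat_mul_pi_mul_cos (Nat.succ_ne_zero j),
      Nat.succ_inj]
    split_ifs <;> norm_num
  convert sum_sq_integral_mul_le_integral_sq (s := Finset.range K) (fun k _ => he k)
    (fun i _ j _ => horth i j) hg using 2 with k
  simp only [cosineCoeff, e, mul_assoc, integral_const_mul, mul_pow, sq_sqrt zero_le_two,
    mul_comm (g _)]

theorem sum_two_mul_sineCoeff_sq_le_one {ι : Type*} [DecidableEq ι] {φ : ι → ℝ → ℝ}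
    {s : Finset ι} (hφ : ∀ i ∈ s, MemLp (φ i) 2 (volume.restrict (Ioo 0 1)))
    (horth : ∀ i ∈ s, ∀ j ∈ s, ∫ x in Ioo 0 1, φ i x * φ j x = if i = j then 1 else 0)
    {k : ℕ} (hk : k ≠ 0) :
    ∑ i ∈ s, 2 * sineCoeff (φ i) k ^ 2 ≤ 1 := by
  have hsin : MemLp (fun x => √2 * sin (k * π * x)) 2 (volume.restrict (Ioo 0 1)) :=
    (by fun_prop : Continuous fun x => √2 * sin (k * π * x)).continuousOn.memLp_restrict_Ioo 2
  have hbessel := sum_sq_integral_mul_le_integral_sq hφ horth hsin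
  have hnorm : ∫ x in Ioo 0 1, (√2 * sin (k * π * x)) ^ 2 = 1 := by
    simp only [mul_pow, sq_sqrt zero_le_two, integral_Ioo_eq_intervalIntegral zero_le_one,
      intervalIntegral.integral_const_mul, integral_sin_nat_mul_pi_mul_sq hk]
    norm_num
  rw [hnorm] at hbessel
  simpa only [sineCoeff, mul_left_comm _ √2, integral_const_mul, mul_pow,
    sq_sqrt zero_le_two] using hbessel

-- Odd away from `0`, where it takes the value `-f 0`; only almost-everywhere values matter here.
noncomputable def oddExtension (f : ℝ → ℝ) : ℝ → ℝ :=
  (Ioi 0).piecewise f fun x => -f (-x)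

theorem oddExtension_of_pos (f : ℝ → ℝ) {x : ℝ} (hx : 0 < x) : oddExtension f x = f x :=
  piecewise_eq_of_mem _ _ _ hx

theorem oddExtension_neg_of_nonneg (f : ℝ → ℝ) {x : ℝ} (hx : 0 ≤ x) :
    oddExtension f (-x) = -f x := by
  rw [oddExtension, piecewise_eq_of_notMem _ _ _ (by simpa using hx), neg_neg]

theorem memLp_oddExtension {f : ℝ → ℝ} {p : ENNReal}
    (hf : MemLp f p (volume.restrict (Ioo 0 1))) :
    MemLp (oddExtension f) p (volume.restrict (Ioc (-1) 1)) := by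
  refine MemLp.piecewise measurableSet_Ioi ?_ ?_
  · rw [Measure.restrict_restrict measurableSet_Ioi,
      show Ioi 0 ∩ Ioc (-1) 1 = Ioc (0:ℝ) 1 by ext; simp; grind,
      Measure.restrict_congr_set Ioo_ae_eq_Ioc.symm]
    exact hf
  · rw [Measure.restrict_restrict measurableSet_Ioi.compl, compl_Ioi,
      show Iic 0 ∩ Ioc (-1) 1 = Ioc (-1:ℝ) 0 by ext; simp; grind]
    have hneg := (Measure.measurePreserving_neg (volume : Measure ℝ)).restrict_preimage
      (measurableSet_Ioo (a := (0:ℝ)) (b := 1))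
    rw [show Neg.neg ⁻¹' Ioo (0:ℝ) 1 = Ioo (-1) 0 by ext; simp,
      Measure.restrict_congr_set Ioo_ae_eq_Ioc] at hneg
    exact (hf.comp_measurePreserving hneg).neg

theorem fourierCoeffOn_oddExtension {f : ℝ → ℝ} (hf : IntegrableOn f (Ioo 0 1)) (n : ℤ) :
    fourierCoeffOn (by norm_num : (-1:ℝ) < 1) (fun x => (oddExtension f x : ℂ)) n =
      -Complex.I * ((∫ x in Ioo 0 1, f x * sin (n * π * x) : ℝ) : ℂ) := by
  have hF : IntervalIntegrable (fun x => (oddExtension f x : ℂ)) volume (-1) 1 := by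
    rw [intervalIntegrable_iff_integrableOn_Ioc_of_le (by norm_num)]
    exact (memLp_oddExtension (memLp_one_iff_integrable.mpr hf)).ofReal.integrable le_rfl
  have : Fact ((0:ℝ) < 1 - -1) := ⟨by norm_num⟩
  rw [fourierCoeffOn_eq_integral, intervalIntegral.integral_from_neg_eq_integral_add_comp_neg]
  · have hint : ∀ x ∈ uIoc (0:ℝ) 1,
        fourier (-n) (x : AddCircle (1 - -1 : ℝ)) • (oddExtension f x : ℂ) +
          fourier (-n) ((-x : ℝ) : AddCircle (1 - -1 : ℝ)) • (oddExtension f (-x) : ℂ) =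
        -2 * Complex.I * ((f x * sin (n * π * x) : ℝ) : ℂ) := by
      intro x hx
      rw [uIoc_of_le zero_le_one] at hx
      rw [oddExtension_of_pos f hx.1, oddExtension_neg_of_nonneg f hx.1.le, fourier_coe_apply,
        fourier_coe_apply, smul_eq_mul, smul_eq_mul,
        show 2 * π * Complex.I * ((-n : ℤ) : ℂ) * (x : ℂ) / ((1 - -1 : ℝ) : ℂ) =
          -((n * π * x : ℝ) : ℂ) * Complex.I by push_cast; ring,
        show 2 * π * Complex.I * ((-n : ℤ) : ℂ) * ((-x : ℝ) : ℂ) / ((1 - -1 : ℝ) : ℂ) =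
          ((n * π * x : ℝ) : ℂ) * Complex.I by push_cast; ring]
      push_cast
      linear_combination (f x : ℂ) * Complex.exp_neg_mul_I_sub_exp_mul_I (n * π * x)
    rw [intervalIntegral.integral_congr_ae (ae_of_all _ hint), intervalIntegral.integral_const_mul,
      intervalIntegral.integral_ofReal, ← integral_Ioo_eq_intervalIntegral zero_le_one,
      Complex.real_smul]
    push_cast
    ring
  · simp only [smul_eq_mul]
    exact hF.continuousOn_mul
      ((fourier (-n)).continuous.comp (AddCircle.continuous_mk' _)).continuousOn

theorem integral_norm_sq_oddExtension {f : ℝ → ℝ}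
    (hf : MemLp f 2 (volume.restrict (Ioo 0 1))) :
    ∫ x in (-1:ℝ)..1, ‖(oddExtension f x : ℂ)‖ ^ 2 = 2 * ∫ x in Ioo 0 1, f x ^ 2 := by
  have hint : IntervalIntegrable (fun x => ‖(oddExtension f x : ℂ)‖ ^ 2) volume (-1) 1 := by
    rw [intervalIntegrable_iff_integrableOn_Ioc_of_le (by norm_num)]
    have hF : MemLp (fun x => (oddExtension f x : ℂ)) 2 (volume.restrict (Ioc (-1) 1)) :=
      (memLp_oddExtension hf).ofReal
    exact hF.integrable_norm_pow two_ne_zero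
  have hsq : ∀ x ∈ uIoc (0:ℝ) 1,
      ‖(oddExtension f x : ℂ)‖ ^ 2 + ‖(oddExtension f (-x) : ℂ)‖ ^ 2 = 2 * f x ^ 2 := by
    intro x hx
    rw [uIoc_of_le zero_le_one] at hx
    rw [oddExtension_of_pos f hx.1, oddExtension_neg_of_nonneg f hx.1.le, Complex.norm_real,
      Complex.norm_real, norm_neg, Real.norm_eq_abs, sq_abs]
    ring
  rw [intervalIntegral.integral_from_neg_eq_integral_add_comp_neg hint,
    intervalIntegral.integral_congr_ae (ae_of_all _ hsq), intervalIntegral.integral_const_mul,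
    ← integral_Ioo_eq_intervalIntegral zero_le_one]

theorem hasSum_two_mul_sineCoeff_sq {f : ℝ → ℝ} (hf : MemLp f 2 (volume.restrict (Ioo 0 1))) :
    HasSum (fun k : ℕ => 2 * sineCoeff f (k + 1) ^ 2) (∫ x in Ioo 0 1, f x ^ 2) := by
  let r : ℤ → ℝ := fun n => ∫ x in Ioo 0 1, f x * sin (n * π * x)
  have hF : MemLp (fun x => (oddExtension f x : ℂ)) 2 (volume.restrict (Ioc (-1) 1)) :=
    (memLp_oddExtension hf).ofReal
  have hparseval := hasSum_sq_fourierCoeffOn (by norm_num : (-1:ℝ) < 1) hF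
  have hcoeff : ∀ n, ‖fourierCoeffOn (by norm_num : (-1:ℝ) < 1)
      (fun x => (oddExtension f x : ℂ)) n‖ ^ 2 = r n ^ 2 := fun n => by
    rw [fourierCoeffOn_oddExtension (hf.integrable one_le_two), norm_mul, norm_neg,
      Complex.norm_I, one_mul, Complex.norm_real, Real.norm_eq_abs, sq_abs]
  simp only [hcoeff, integral_norm_sq_oddExtension hf, smul_eq_mul] at hparseval
  rw [show (1 - -1 : ℝ)⁻¹ * (2 * ∫ x in Ioo 0 1, f x ^ 2) = ∫ x in Ioo 0 1, f x ^ 2 by ring]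
    at hparseval
  have hr0 : r 0 = 0 := by simp [r]
  have hrneg : ∀ n, r (-n) = -r n := fun n => by simp [r, integral_neg]
  have hnat := hparseval.nat_add_neg
  simp only [hrneg, hr0, neg_sq] at hnat
  have hshift := (hasSum_nat_add_iff' (f := fun k : ℕ => 2 * sineCoeff f k ^ 2) 1).mpr
    (by simpa [sineCoeff, r, two_mul] using hnat)
  simpa [sineCoeff] using hshift

namespace InH10

variable {φ g : ℝ → ℝ}

theorem memLp_two (h : InH10 φ g) : MemLp g 2 (volume.restrict (Ioo 0 1)) :=
  (memLp_two_iff_integrable_sq h.1.aestronglyMeasurable).mpr h.2.1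

theorem integrableOn (h : InH10 φ g) : IntegrableOn g (Ioo 0 1) :=
  h.memLp_two.integrable one_le_two

theorem intervalIntegrable (h : InH10 φ g) : IntervalIntegrable g volume 0 1 :=
  (intervalIntegrable_iff_integrableOn_Ioo_of_le zero_le_one).mpr h.integrableOn

theorem continuousOn (h : InH10 φ g) : ContinuousOn φ (Icc 0 1) := by
  have hprim := intervalIntegral.continuousOn_primitive_interval (a := 0) (b := 1) (f := g)
    (by rw [uIcc_of_le zero_le_one]
        exact (integrableOn_Icc_iff_integrableOn_Ioo).mpr h.integrableOn)
  rw [uIcc_of_le zero_le_one] at hprim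
  exact hprim.congr h.2.2.1

theorem memLp (h : InH10 φ g) : MemLp φ 2 (volume.restrict (Ioo 0 1)) :=
  h.continuousOn.memLp_restrict_Ioo 2

theorem cosineCoeff_eq (h : InH10 φ g) {k : ℕ} (hk : k ≠ 0) :
    cosineCoeff g k = k * π * sineCoeff φ k := by
  have hkπ : (k : ℝ) * π ≠ 0 := mul_ne_zero (Nat.cast_ne_zero.mpr hk) pi_ne_zero
  have hibp := intervalIntegral.integral_primitive_mul_deriv h.intervalIntegrable
    (f := fun x => -cos (k * π * x) / (k * π)) (f' := fun x => sin (k * π * x))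
    (fun x => (((hasDerivAt_id x).const_mul _).cos.neg.div_const _).congr_deriv
      (by simp only [id]; field_simp))
    (by fun_prop)
  have hφ : sineCoeff φ k = ∫ x in (0:ℝ)..1, (∫ t in (0:ℝ)..x, g t) * sin (k * π * x) := by
    rw [sineCoeff, integral_Ioo_eq_intervalIntegral zero_le_one]
    refine intervalIntegral.integral_congr fun x hx => ?_
    rw [uIcc_of_le zero_le_one] at hx
    simp only [h.2.2.1 x hx]
  have hg : ∫ t in (0:ℝ)..1, g t = 0 :=
    (h.2.2.1 1 (right_mem_Icc.mpr zero_le_one)).symm.trans h.2.2.2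
  have hcos : ∫ x in (0:ℝ)..1, g x * (-cos (k * π * x) / (k * π)) =
      -(k * π)⁻¹ * cosineCoeff g k := by
    rw [cosineCoeff, integral_Ioo_eq_intervalIntegral zero_le_one,
      ← intervalIntegral.integral_const_mul]
    congr 1
    funext x
    ring
  rw [hφ, hibp, hg, hcos]
  field_simp
  ring

theorem sum_mul_two_mul_sineCoeff_sq_le (h : InH10 φ g) (K : ℕ) :
    ∑ k ∈ Finset.range K, π ^ 2 * ((k : ℝ) + 1) ^ 2 * (2 * sineCoeff φ (k + 1) ^ 2) ≤
      ∫ x in Ioo 0 1, g x ^ 2 := by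
  refine le_of_eq_of_le (Finset.sum_congr rfl fun k _ => ?_)
    (sum_two_mul_cosineCoeff_sq_le h.memLp_two K)
  rw [h.cosineCoeff_eq k.succ_ne_zero]
  push_cast
  ring

end InH10

theorem sum_range_add_mul_sub_le_sum_mul {w d : ℕ → ℝ} (hw : Monotone w)
    (hd₀ : ∀ k, 0 ≤ d k) (hd₁ : ∀ k, d k ≤ 1) {J K : ℕ} (hJK : J ≤ K) :
    ∑ k ∈ Finset.range J, w k + w J * (∑ k ∈ Finset.range K, d k - J) ≤
      ∑ k ∈ Finset.range K, w k * d k := by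
  have hlow : ∑ k ∈ Finset.range J, (w k + w J * (d k - 1)) ≤
      ∑ k ∈ Finset.range J, w k * d k :=
    Finset.sum_le_sum fun k hk => by nlinarith [hw (Finset.mem_range.mp hk).le, hd₁ k]
  have hhigh : ∑ k ∈ Finset.Ico J K, w J * d k ≤ ∑ k ∈ Finset.Ico J K, w k * d k :=
    Finset.sum_le_sum fun k hk =>
      mul_le_mul_of_nonneg_right (hw (Finset.mem_Ico.mp hk).1) (hd₀ k)
  rw [← Finset.sum_range_add_sum_Ico _ hJK, ← Finset.sum_range_add_sum_Ico _ hJK]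
  simp only [Finset.sum_add_distrib, ← Finset.mul_sum, Finset.sum_sub_distrib, Finset.sum_const,
    Finset.card_range, nsmul_eq_mul, mul_one] at hlow hhigh ⊢
  linarith

theorem sum_range_le_of_hasSum {w d : ℕ → ℝ} (hw : Monotone w)
    (hd₀ : ∀ k, 0 ≤ d k) (hd₁ : ∀ k, d k ≤ 1) {J : ℕ} (hd : HasSum d J) {B : ℝ}
    (hB : ∀ K, ∑ k ∈ Finset.range K, w k * d k ≤ B) :
    ∑ k ∈ Finset.range J, w k ≤ B := by
  have hlim : Filter.Tendsto
      (fun K => ∑ k ∈ Finset.range J, w k + w J * (∑ k ∈ Finset.range K, d k - J))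
      Filter.atTop (nhds (∑ k ∈ Finset.range J, w k + w J * (J - J))) :=
    tendsto_const_nhds.add ((hd.tendsto_sum_nat.sub_const _).const_mul _)
  rw [sub_self, mul_zero, add_zero] at hlim
  exact le_of_tendsto hlim (Filter.eventually_atTop.mpr
    ⟨J, fun K hK => (sum_range_add_mul_sub_le_sum_mul hw hd₀ hd₁ hK).trans (hB K)⟩)

theorem sum_range_add_one_sq (J : ℕ) :
    ∑ k ∈ Finset.range J, ((k : ℝ) + 1) ^ 2 = (J : ℝ) * (J + 1) * (2 * J + 1) / 6 := by
  induction J with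
  | zero => simp
  | succ J ih => rw [Finset.sum_range_succ, ih]; push_cast; ring

theorem sum_kinetic_energy_ge_of_orthonormal {ι : Type*} [DecidableEq ι] {φ g : ι → ℝ → ℝ}
    {s : Finset ι} (hH : ∀ i ∈ s, InH10 (φ i) (g i))
    (horth : ∀ i ∈ s, ∀ j ∈ s, ∫ x in Ioo 0 1, φ i x * φ j x = if i = j then 1 else 0) :
    π ^ 2 * ((s.card : ℝ) * (s.card + 1) * (2 * s.card + 1) / 6) ≤
      ∑ i ∈ s, ∫ x in Ioo 0 1, g i x ^ 2 := by
  let d : ℕ → ℝ := fun k => ∑ i ∈ s, 2 * sineCoeff (φ i) (k + 1) ^ 2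
  have hd : HasSum d s.card := by
    have hnorm : ∀ i ∈ s, ∫ x in Ioo 0 1, φ i x ^ 2 = 1 := fun i hi => by
      simpa [sq] using horth i hi i hi
    have hsum := hasSum_sum fun i hi => hasSum_two_mul_sineCoeff_sq (hH i hi).memLp
    rw [Finset.sum_congr rfl hnorm] at hsum
    simpa using hsum
  have hd₀ : ∀ k, 0 ≤ d k := fun k => Finset.sum_nonneg fun i _ => by positivity
  have hd₁ : ∀ k, d k ≤ 1 := fun k =>
    sum_two_mul_sineCoeff_sq_le_one (fun i hi => (hH i hi).memLp) horth k.succ_ne_zero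
  have hw : Monotone fun k : ℕ => π ^ 2 * ((k : ℝ) + 1) ^ 2 := fun a b hab => by
    dsimp only
    gcongr
  have hB : ∀ K, ∑ k ∈ Finset.range K, π ^ 2 * ((k : ℝ) + 1) ^ 2 * d k ≤
      ∑ i ∈ s, ∫ x in Ioo 0 1, g i x ^ 2 := fun K => by
    simp only [d, Finset.mul_sum]
    rw [Finset.sum_comm]
    exact Finset.sum_le_sum fun i hi => (hH i hi).sum_mul_two_mul_sineCoeff_sq_le K
  simpa only [← Finset.mul_sum, sum_range_add_one_sq] using
    sum_range_le_of_hasSum hw hd₀ hd₁ hd hB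

theorem kinetic_energy_lower_bound_of_monotone (φ g : ℕ → ℝ → ℝ)
    (hH : ∀ j, 1 ≤ j → InH10 (φ j) (g j))
    (horth : ∀ i, 1 ≤ i → ∀ j, 1 ≤ j →
      (∫ x in Set.Ioo (0:ℝ) 1, φ i x * φ j x) = if i = j then 1 else 0)
    (hmono : ∀ j, 1 ≤ j →
      (∫ x in Set.Ioo (0:ℝ) 1, (g j x) ^ 2) ≤ ∫ x in Set.Ioo (0:ℝ) 1, (g (j+1) x) ^ 2) :
    ∀ j : ℕ, 1 ≤ j →
      Real.pi ^ 2 * (j : ℝ) ^ 2 / 3 ≤ ∫ x in Set.Ioo (0:ℝ) 1, (g j x) ^ 2 := by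
  intro J hJ
  have hsum := sum_kinetic_energy_ge_of_orthonormal (s := Finset.Icc 1 J)
    (fun i hi => hH i (Finset.mem_Icc.mp hi).1)
    (fun i hi j hj => horth i (Finset.mem_Icc.mp hi).1 j (Finset.mem_Icc.mp hj).1)
  rw [Nat.card_Icc, add_tsub_cancel_right] at hsum
  have hle : ∑ i ∈ Finset.Icc 1 J, ∫ x in Ioo 0 1, g i x ^ 2 ≤
      J * ∫ x in Ioo 0 1, g J x ^ 2 := by
    simpa using Finset.sum_le_card_nsmul _ _ _ fun i hi =>
      monotoneOn_nat_Ici_of_le_succ hmono (Finset.mem_Icc.mp hi).1 (mem_Ici.mpr hJ)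
        (Finset.mem_Icc.mp hi).2
  have hJ₀ : (0 : ℝ) < J := by exact_mod_cast hJ
  refine le_of_mul_le_mul_left ?_ hJ₀
  calc (J : ℝ) * (π ^ 2 * J ^ 2 / 3) ≤ π ^ 2 * ((J : ℝ) * (J + 1) * (2 * J + 1) / 6) := by
        nlinarith [mul_nonneg (sq_nonneg π) (mul_nonneg hJ₀.le (by positivity : (0:ℝ) ≤ 3 * J + 1))]
    _ ≤ _ := hsum
    _ ≤ _ := hle
end

section
/- Let s ∈ (1, ∞), let ω ⊆ ℝ² be a measurable set, and let f : ω × ℝ² → [0, ∞) be measurable. Define the velocity average ρ_f(y) = ∫_{ℝ²} f(y,v) dv for y ∈ ω. Then there is a constant C depending only on s such that ‖ρ_f‖_{L^{(2s−1)/s}(ω)} ≤ C · ‖f‖_{L^s(ω×ℝ²)}^{s/(2s−1)} · ( ∬_{ω×ℝ²} |v|² f(y,v) dy dv )^{(s−1)/(2s−1)}, where the inequality is understood in the extended nonnegative reals (both sides may be infinite) and all norms and integrals are with respect to Lebesgue measure. -/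
open MeasureTheory
open scoped ENNReal

/-- The plane `ℝ²` with the Euclidean norm. -/
abbrev Plane := EuclideanSpace ℝ (Fin 2)

/-!
For fixed `y`, split the velocity integral at `‖v‖ = r`. Hölder bounds the part over the ball by
`‖f(y,·)‖_s |B_r|^(1-1/s)`, of order `r^(2(1-1/s))`, and Chebyshev bounds the rest by
`r⁻² ∫ ‖v‖² f(y,v) dv`. Optimizing in `r` gives
`ρ_f(y) ≲ (∫ f(y,v)^s dv)^(1/(2s-1)) (∫ ‖v‖² f(y,v) dv)^((s-1)/(2s-1))`.
Raised to the power `(2s-1)/s`, the right side is a product of powers with exponents `1/s` and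
`(s-1)/s`, so Hölder in `y` and Fubini finish the proof.
-/

open Metric

namespace ENNReal

lemma le_two_mul_rpow_mul_rpow_of_forall_le {x a b : ℝ≥0∞} {γ : ℝ} (hγ : 0 < γ)
    (ha : a = 0 → x = 0) (hb : b = 0 → x = 0)
    (h : ∀ t : ℝ≥0∞, t ≠ 0 → t ≠ ∞ → x ≤ a * t ^ γ + t⁻¹ * b) :
    x ≤ 2 * a ^ (1 / (1 + γ)) * b ^ (γ / (1 + γ)) := by
  have hθ : 0 < 1 / (1 + γ) := by positivity
  rcases eq_or_ne a 0 with rfl | ha0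
  · simp [ha rfl]
  rcases eq_or_ne b 0 with rfl | hb0
  · simp [hb rfl]
  rcases eq_or_ne a ∞ with rfl | hatop
  · rw [top_rpow_of_pos hθ, mul_top two_ne_zero, top_mul (by positivity)]
    exact le_top
  rcases eq_or_ne b ∞ with rfl | hbtop
  · rw [top_rpow_of_pos (by positivity), mul_top (by positivity)]
    exact le_top
  -- With `α ^ (1 + γ) = a` and `β ^ (1 + γ) = b`, both terms equal `α * β ^ γ` at `t = β / α`.
  set α := a ^ (1 / (1 + γ))
  set β := b ^ (1 / (1 + γ))
  have hα0 : α ≠ 0 := by positivity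
  have hαtop : α ≠ ∞ := rpow_ne_top_of_nonneg hθ.le hatop
  have hβ0 : β ≠ 0 := by positivity
  have hβtop : β ≠ ∞ := rpow_ne_top_of_nonneg hθ.le hbtop
  have hroot : ∀ c : ℝ≥0∞, (c ^ (1 / (1 + γ))) ^ (1 + γ) = c := fun c => by
    rw [← rpow_mul, one_div_mul_cancel (by positivity), rpow_one]
  have hpow : ∀ c : ℝ≥0∞, c ≠ 0 → c ≠ ∞ → c ^ (1 + γ) = c * c ^ γ := fun c h0 htop => by
    rw [rpow_add _ _ h0 htop, rpow_one]
  have hαγ0 : α ^ γ ≠ 0 := by positivity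
  have hαγtop : α ^ γ ≠ ∞ := rpow_ne_top_of_nonneg hγ.le hαtop
  have hβγ : β ^ γ = b ^ (γ / (1 + γ)) := by
    simp only [β, ← rpow_mul, one_div_mul_eq_div]
  calc x ≤ a * (β * α⁻¹) ^ γ + (β * α⁻¹)⁻¹ * b := h _ (by simp [hβ0, hαtop])
        (mul_ne_top hβtop (inv_ne_top.2 hα0))
    _ = α * β ^ γ + α * β ^ γ := by
      rw [← hroot a, ← hroot b, hpow α hα0 hαtop, hpow β hβ0 hβtop, mul_rpow_of_nonneg _ _ hγ.le,
        inv_rpow, ENNReal.mul_inv (Or.inl hβ0) (Or.inl hβtop), inv_inv]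
      congr 1
      · calc α * α ^ γ * (β ^ γ * (α ^ γ)⁻¹) = α * β ^ γ * (α ^ γ * (α ^ γ)⁻¹) := by ring
          _ = α * β ^ γ := by rw [ENNReal.mul_inv_cancel hαγ0 hαγtop, mul_one]
      · calc β⁻¹ * α * (β * β ^ γ) = α * β ^ γ * (β * β⁻¹) := by ring
          _ = α * β ^ γ := by rw [ENNReal.mul_inv_cancel hβ0 hβtop, mul_one]
    _ = 2 * a ^ (1 / (1 + γ)) * b ^ (γ / (1 + γ)) := by rw [hβγ, mul_assoc, two_mul]

end ENNReal

section

variable {α : Type*} [MeasurableSpace α] {μ : Measure α}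

lemma setLIntegral_le_lintegral_rpow_mul_measure_rpow {g : α → ℝ≥0∞} (hg : AEMeasurable g μ)
    {s : ℝ} (hs : 1 ≤ s) (S : Set α) :
    ∫⁻ v in S, g v ∂μ ≤ (∫⁻ v, g v ^ s ∂μ) ^ (1 / s) * μ S ^ (1 - 1 / s) := by
  have hs0 : 0 < s := zero_lt_one.trans_le hs
  have hholder := ENNReal.lintegral_mul_norm_pow_le (μ := μ.restrict S)
    (hg.restrict.pow_const s) aemeasurable_const (by positivity : 0 ≤ 1 / s)
    (sub_nonneg.2 ((div_le_one hs0).2 hs)) (add_sub_cancel _ _) (g := fun _ => 1)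
  simp only [ENNReal.one_rpow, mul_one, one_mul, lintegral_const,
    Measure.restrict_apply_univ] at hholder
  calc ∫⁻ v in S, g v ∂μ = ∫⁻ v in S, (g v ^ s) ^ (1 / s) ∂μ := by
        simp only [← ENNReal.rpow_mul, mul_one_div_cancel hs0.ne', ENNReal.rpow_one]
    _ ≤ (∫⁻ v in S, g v ^ s ∂μ) ^ (1 / s) * μ S ^ (1 - 1 / s) := hholder
    _ ≤ (∫⁻ v, g v ^ s ∂μ) ^ (1 / s) * μ S ^ (1 - 1 / s) := by
        gcongr
        exact Measure.restrict_le_self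

lemma lintegral_eq_zero_of_lintegral_rpow_eq_zero {g : α → ℝ≥0∞} (hg : AEMeasurable g μ)
    {s : ℝ} (hs : 0 < s) (h : ∫⁻ v, g v ^ s ∂μ = 0) : ∫⁻ v, g v ∂μ = 0 := by
  rw [lintegral_eq_zero_iff' (hg.pow_const s)] at h
  rw [lintegral_eq_zero_iff' hg]
  filter_upwards [h] with v hv
  exact (ENNReal.rpow_eq_zero_iff_of_pos hs).1 hv

lemma lintegral_rpow_le_mul_rpow_mul_rpow {ρ A B : α → ℝ≥0∞} (hA : AEMeasurable A μ)
    (hB : AEMeasurable B μ) {c : ℝ≥0∞} {p a b : ℝ} (hp : 0 < p) (ha : 0 ≤ a) (hb : 0 ≤ b)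
    (hab : a + b = 1 / p) (h : ∀ᵐ x ∂μ, ρ x ≤ c * A x ^ a * B x ^ b) :
    (∫⁻ x, ρ x ^ p ∂μ) ^ (1 / p) ≤ c * (∫⁻ x, A x ∂μ) ^ a * (∫⁻ x, B x ∂μ) ^ b := by
  have hap : a * p + b * p = 1 := by rw [← add_mul, hab, one_div_mul_cancel hp.ne']
  have hpow : ∀ x : α, (c * A x ^ a * B x ^ b) ^ p = c ^ p * (A x ^ (a * p) * B x ^ (b * p)) :=
    fun x => by
      rw [ENNReal.mul_rpow_of_nonneg _ _ hp.le, ENNReal.mul_rpow_of_nonneg _ _ hp.le,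
        ← ENNReal.rpow_mul, ← ENNReal.rpow_mul, mul_assoc]
  calc (∫⁻ x, ρ x ^ p ∂μ) ^ (1 / p)
      ≤ (c ^ p * ∫⁻ x, A x ^ (a * p) * B x ^ (b * p) ∂μ) ^ (1 / p) := by
        gcongr
        rw [← lintegral_const_mul'' _ (f := fun x => A x ^ (a * p) * B x ^ (b * p))
          ((hA.pow_const _).mul (hB.pow_const _))]
        refine lintegral_mono_ae ?_
        filter_upwards [h] with x hx
        rw [← hpow]
        gcongr
    _ ≤ (c ^ p * ((∫⁻ x, A x ∂μ) ^ (a * p) * (∫⁻ x, B x ∂μ) ^ (b * p))) ^ (1 / p) := by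
        gcongr
        exact ENNReal.lintegral_mul_norm_pow_le hA hB (by positivity) (by positivity) hap
    _ = c * (∫⁻ x, A x ∂μ) ^ a * (∫⁻ x, B x ∂μ) ^ b := by
        rw [← mul_assoc, ENNReal.mul_rpow_of_nonneg _ _ (by positivity),
          ENNReal.mul_rpow_of_nonneg _ _ (by positivity)]
        simp only [← ENNReal.rpow_mul, mul_assoc, mul_one_div_cancel hp.ne', mul_one,
          ENNReal.rpow_one]

end

section

variable {E : Type*} [NormedAddCommGroup E] [MeasurableSpace E] [OpensMeasurableSpace E]
  {μ : Measure E}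

lemma setLIntegral_compl_ball_le (g : E → ℝ≥0∞) {r : ℝ} (hr : 0 < r) (k : ℕ) :
    ∫⁻ v in (ball 0 r)ᶜ, g v ∂μ
      ≤ (ENNReal.ofReal (r ^ k))⁻¹ * ∫⁻ v, ENNReal.ofReal (‖v‖ ^ k) * g v ∂μ := by
  have hrk : ENNReal.ofReal (r ^ k) ≠ 0 := by positivity
  rw [← lintegral_const_mul' _ _ (ENNReal.inv_ne_top.2 hrk)]
  refine (setLIntegral_mono' measurableSet_ball.compl fun v hv => ?_).trans
    (setLIntegral_le_lintegral _ _)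
  have hrv : r ≤ ‖v‖ := by simpa using hv
  calc g v = (ENNReal.ofReal (r ^ k))⁻¹ * ENNReal.ofReal (r ^ k) * g v := by
        rw [ENNReal.inv_mul_cancel hrk ENNReal.ofReal_ne_top, one_mul]
    _ ≤ (ENNReal.ofReal (r ^ k))⁻¹ * (ENNReal.ofReal (‖v‖ ^ k) * g v) := by
        rw [mul_assoc]
        gcongr

lemma lintegral_le_rpow_mul_measure_ball_rpow_add {g : E → ℝ≥0∞} (hg : AEMeasurable g μ)
    {s : ℝ} (hs : 1 ≤ s) {r : ℝ} (hr : 0 < r) (k : ℕ) :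
    ∫⁻ v, g v ∂μ ≤ (∫⁻ v, g v ^ s ∂μ) ^ (1 / s) * μ (ball 0 r) ^ (1 - 1 / s)
      + (ENNReal.ofReal (r ^ k))⁻¹ * ∫⁻ v, ENNReal.ofReal (‖v‖ ^ k) * g v ∂μ := by
  rw [← lintegral_add_compl g measurableSet_ball]
  exact add_le_add (setLIntegral_le_lintegral_rpow_mul_measure_rpow hg hs _)
    (setLIntegral_compl_ball_le g hr k)

lemma lintegral_eq_zero_of_lintegral_norm_pow_mul_eq_zero [NullSingletonClass μ] {g : E → ℝ≥0∞}
    (hg : AEMeasurable g μ) {k : ℕ} (h : ∫⁻ v, ENNReal.ofReal (‖v‖ ^ k) * g v ∂μ = 0) :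
    ∫⁻ v, g v ∂μ = 0 := by
  rw [lintegral_eq_zero_iff' (f := fun v => ENNReal.ofReal (‖v‖ ^ k) * g v)
    ((measurable_norm.pow_const k).ennreal_ofReal.aemeasurable.mul hg)] at h
  rw [lintegral_eq_zero_iff' hg]
  filter_upwards [h, μ.ae_ne 0] with v hv hv0
  have hweight : ENNReal.ofReal (‖v‖ ^ k) ≠ 0 := by
    have := norm_pos_iff.2 hv0
    positivity
  exact (mul_eq_zero.1 hv).resolve_left hweight

end

lemma Plane.lintegral_le_mul_rpow_mul_rpow {s : ℝ} (hs : 1 < s) {g : Plane → ℝ≥0∞}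
    (hg : AEMeasurable g) :
    ∫⁻ v, g v ≤ 2 * volume (ball (0 : Plane) 1) ^ ((s - 1) / (2 * s - 1))
      * (∫⁻ v, g v ^ s) ^ (1 / (2 * s - 1))
      * (∫⁻ v, ENNReal.ofReal (‖v‖ ^ 2) * g v) ^ ((s - 1) / (2 * s - 1)) := by
  have hs0 : 0 < s := zero_lt_one.trans hs
  have hγ : 0 < 1 - 1 / s := sub_pos.2 ((div_lt_one hs0).2 hs)
  have h2s : 0 < 2 * s - 1 := by linarith
  set V := volume (ball (0 : Plane) 1)
  set A := ∫⁻ v, g v ^ s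
  set B := ∫⁻ v, ENNReal.ofReal (‖v‖ ^ 2) * g v
  have hV0 : V ≠ 0 := (measure_ball_pos volume 0 one_pos).ne'
  have hsplit : ∀ t : ℝ≥0∞, t ≠ 0 → t ≠ ∞ →
      ∫⁻ v, g v ≤ V ^ (1 - 1 / s) * A ^ (1 / s) * t ^ (1 - 1 / s) + t⁻¹ * B := by
    intro t ht0 httop
    have hr : 0 < Real.sqrt t.toReal := Real.sqrt_pos.2 (ENNReal.toReal_pos ht0 httop)
    have hrt : ENNReal.ofReal (Real.sqrt t.toReal ^ 2) = t := by
      rw [Real.sq_sqrt ENNReal.toReal_nonneg, ENNReal.ofReal_toReal httop]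
    have := lintegral_le_rpow_mul_measure_ball_rpow_add hg hs.le hr 2
    rw [Measure.addHaar_ball_of_pos _ _ hr, finrank_euclideanSpace_fin, hrt,
      ENNReal.mul_rpow_of_nonneg _ _ hγ.le] at this
    calc ∫⁻ v, g v ≤ A ^ (1 / s) * (t ^ (1 - 1 / s) * V ^ (1 - 1 / s)) + t⁻¹ * B := this
      _ = V ^ (1 - 1 / s) * A ^ (1 / s) * t ^ (1 - 1 / s) + t⁻¹ * B := by ring
  have hA : V ^ (1 - 1 / s) * A ^ (1 / s) = 0 → ∫⁻ v, g v = 0 := fun h =>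
    lintegral_eq_zero_of_lintegral_rpow_eq_zero hg hs0 <|
      (ENNReal.rpow_eq_zero_iff_of_pos (by positivity)).1 <|
        (mul_eq_zero.1 h).resolve_left (by positivity)
  have hB : B = 0 → ∫⁻ v, g v = 0 := lintegral_eq_zero_of_lintegral_norm_pow_mul_eq_zero hg
  have hexp₁ : 1 / (1 + (1 - 1 / s)) = s / (2 * s - 1) := by field_simp; ring
  have hexp₂ : (1 - 1 / s) / (1 + (1 - 1 / s)) = (s - 1) / (2 * s - 1) := by field_simp; ring
  have hexp₃ : 1 / s * (s / (2 * s - 1)) = 1 / (2 * s - 1) := by field_simp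
  have hexp₄ : (1 - 1 / s) * (s / (2 * s - 1)) = (s - 1) / (2 * s - 1) := by field_simp
  calc ∫⁻ v, g v ≤ 2 * (V ^ (1 - 1 / s) * A ^ (1 / s)) ^ (1 / (1 + (1 - 1 / s)))
        * B ^ ((1 - 1 / s) / (1 + (1 - 1 / s))) :=
        ENNReal.le_two_mul_rpow_mul_rpow_of_forall_le hγ hA hB hsplit
    _ = 2 * V ^ ((s - 1) / (2 * s - 1)) * A ^ (1 / (2 * s - 1))
        * B ^ ((s - 1) / (2 * s - 1)) := by
        rw [hexp₁, hexp₂, ENNReal.mul_rpow_of_nonneg _ _ (by positivity), ← ENNReal.rpow_mul,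
          ← ENNReal.rpow_mul, hexp₃, hexp₄]
        ring

theorem kinetic_interpolation_inequality (s : ℝ) (hs : 1 < s) :
    ∃ C : ℝ≥0∞, C ≠ ⊤ ∧
      ∀ (ω : Set Plane), MeasurableSet ω →
        ∀ (f : Plane × Plane → ℝ), Measurable f → (∀ p, 0 ≤ f p) →
          (∫⁻ y in ω, (∫⁻ v, ENNReal.ofReal (f (y, v))) ^ ((2*s - 1)/s)) ^ (s/(2*s - 1))
            ≤ C * ((∫⁻ p in ω ×ˢ (Set.univ : Set Plane),
                      ENNReal.ofReal (f p) ^ s) ^ (1/s)) ^ (s/(2*s - 1))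
                * (∫⁻ p in ω ×ˢ (Set.univ : Set Plane),
                      ENNReal.ofReal (‖p.2‖ ^ 2 * f p)) ^ ((s - 1)/(2*s - 1)) := by
  have hs0 : 0 < s := zero_lt_one.trans hs
  have h2s : 0 < 2 * s - 1 := by linarith
  refine ⟨2 * volume (ball (0 : Plane) 1) ^ ((s - 1) / (2 * s - 1)),
    ENNReal.mul_ne_top ENNReal.ofNat_ne_top
      (ENNReal.rpow_ne_top_of_nonneg (by bound) measure_ball_lt_top.ne),
    fun ω _ f hf _ => ?_⟩
  have hF : Measurable fun p => ENNReal.ofReal (f p) := hf.ennreal_ofReal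
  have hmoment : Measurable fun p : Plane × Plane => ENNReal.ofReal (‖p.2‖ ^ 2 * f p) := by
    fun_prop
  have hexp : 1 / s * (s / (2 * s - 1)) = 1 / (2 * s - 1) := by field_simp
  rw [← ENNReal.rpow_mul, hexp, ← one_div_div (2 * s - 1) s, Measure.volume_eq_prod,
    setLIntegral_prod _ (hF.pow_const s).aemeasurable, setLIntegral_prod _ hmoment.aemeasurable]
  simp only [Measure.restrict_univ, ENNReal.ofReal_mul (sq_nonneg _)]
  refine lintegral_rpow_le_mul_rpow_mul_rpow (hF.pow_const s).lintegral_prod_right'.aemeasurable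
    (by fun_prop) (by positivity) (by positivity) (by bound) (by field_simp; ring)
    (ae_of_all _ fun y => Plane.lintegral_le_mul_rpow_mul_rpow hs (by fun_prop))
end

section
/- Let p ∈ [2, ∞) and let φ : ℝ → ℝ satisfy: there is a measurable g : ℝ → ℝ with ∫₀¹ g(t)² dt < ∞ and φ(x) = ∫₀^x g(t) dt for all x ∈ [0,1]. Then ‖φ‖_{L^p(0,1)} ≤ 2^{1/2 − 1/p} · ‖g‖_{L²(0,1)}^{1/2 − 1/p} · ‖φ‖_{L²(0,1)}^{1/2 + 1/p}. -/
/-!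
Since `φ` is a primitive of `g` vanishing at `0`, `φ x ^ 2 = 2 ∫₀ˣ g φ`, so Cauchy–Schwarz gives
`‖φ‖_∞ ^ 2 ≤ 2 ‖g‖₂ ‖φ‖₂`. Splitting `|φ| ^ p = |φ| ^ (p - 2) |φ| ^ 2` interpolates
`‖φ‖_p ≤ ‖φ‖_∞ ^ (1 - 2/p) ‖φ‖₂ ^ (2/p)`, and the two bounds combine to the claim.
-/

open MeasureTheory Set
open scoped ENNReal

theorem eLpNorm_le_rpow_mul_eLpNorm_two_rpow {α E : Type*} {m : MeasurableSpace α}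
    [NormedAddCommGroup E] {μ : Measure α} {f : α → E} (hf : AEStronglyMeasurable f μ)
    {M : ℝ≥0∞} (hM : ∀ᵐ x ∂μ, ‖f x‖ₑ ≤ M) {p : ℝ} (hp : 2 ≤ p) :
    eLpNorm f (ENNReal.ofReal p) μ ≤ M ^ (1 - 2 / p) * eLpNorm f 2 μ ^ (2 / p) := by
  have hp0 : 0 < p := by linarith
  have hlint : ∫⁻ x, ‖f x‖ₑ ^ p ∂μ ≤ M ^ (p - 2) * eLpNorm f 2 μ ^ (2 : ℝ) := by
    rw [eLpNorm_eq_lintegral_rpow_enorm_toReal two_ne_zero ENNReal.ofNat_ne_top,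
      ← ENNReal.rpow_mul, ENNReal.toReal_ofNat, one_div_mul_cancel two_ne_zero, ENNReal.rpow_one,
      ← lintegral_const_mul'' _ (hf.enorm.pow_const _)]
    refine lintegral_mono_ae ?_
    filter_upwards [hM] with x hx
    calc ‖f x‖ₑ ^ p = ‖f x‖ₑ ^ (p - 2) * ‖f x‖ₑ ^ (2 : ℝ) := by
          rw [← ENNReal.rpow_add_of_nonneg _ _ (by linarith) zero_le_two, sub_add_cancel]
      _ ≤ M ^ (p - 2) * ‖f x‖ₑ ^ (2 : ℝ) := by gcongr
  calc eLpNorm f (ENNReal.ofReal p) μ = (∫⁻ x, ‖f x‖ₑ ^ p ∂μ) ^ (1 / p) := by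
        rw [eLpNorm_eq_lintegral_rpow_enorm_toReal (by simpa using hp0) ENNReal.ofReal_ne_top,
          ENNReal.toReal_ofReal hp0.le]
    _ ≤ (M ^ (p - 2) * eLpNorm f 2 μ ^ (2 : ℝ)) ^ (1 / p) := by gcongr
    _ = M ^ (1 - 2 / p) * eLpNorm f 2 μ ^ (2 / p) := by
        rw [ENNReal.mul_rpow_of_nonneg _ _ (by positivity), ← ENNReal.rpow_mul, ← ENNReal.rpow_mul]
        congr 2 <;> field_simp

theorem intervalIntegral.sq_integral_eq_two_mul_integral_mul_integral {g : ℝ → ℝ} {a b : ℝ}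
    (hg : IntervalIntegrable g volume a b) :
    (∫ t in a..b, g t) ^ 2 = 2 * ∫ t in a..b, g t * ∫ s in a..t, g s := by
  set F : ℝ → ℝ := fun x => ∫ s in a..x, g s
  have hF : AbsolutelyContinuousOnInterval F a b :=
    hg.absolutelyContinuousOnInterval_intervalIntegral left_mem_uIcc
  have hderiv : ∫ t in a..b, deriv F t * F t + F t * deriv F t
      = ∫ t in a..b, 2 * (g t * F t) := by
    refine intervalIntegral.integral_congr_ae ?_
    filter_upwards [hg.ae_hasDerivAt_integral] with t ht htab
    rw [(ht (uIoc_subset_uIcc htab) a left_mem_uIcc).deriv]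
    ring
  have hFTC := hF.integral_deriv_mul_eq_sub hF
  rw [hderiv, intervalIntegral.integral_const_mul] at hFTC
  simpa [F, sq] using hFTC.symm

theorem continuousOn_Icc_of_eq_intervalIntegral {φ g : ℝ → ℝ} {a b : ℝ}
    (hg : IntervalIntegrable g volume a b) (hφ : ∀ x ∈ Icc a b, φ x = ∫ t in a..x, g t) :
    ContinuousOn φ (Icc a b) :=
  ((intervalIntegral.continuousOn_primitive_interval
    ((intervalIntegrable_iff' (μ := volume)).1 hg)).mono Icc_subset_uIcc).congr hφ

theorem enorm_sq_le_two_mul_eLpNorm_mul_eLpNorm_of_eq_intervalIntegral {φ g : ℝ → ℝ} {a b : ℝ}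
    (hg : IntervalIntegrable g volume a b) (hφ : ∀ x ∈ Icc a b, φ x = ∫ t in a..x, g t)
    {x : ℝ} (hx : x ∈ Icc a b) :
    ‖φ x‖ₑ ^ 2 ≤ 2 * eLpNorm g 2 (volume.restrict (Ioo a b))
      * eLpNorm φ 2 (volume.restrict (Ioo a b)) := by
  set μ := volume.restrict (Ioo a b)
  have hsq : φ x ^ 2 = 2 * ∫ t in a..x, g t * φ t := by
    rw [hφ x hx, intervalIntegral.sq_integral_eq_two_mul_integral_mul_integral
      (hg.mono_set (uIcc_subset_uIcc_left (Icc_subset_uIcc hx)))]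
    congr 1
    refine intervalIntegral.integral_congr fun t ht => ?_
    rw [uIcc_of_le hx.1] at ht
    rw [hφ t ⟨ht.1, ht.2.trans hx.2⟩]
  have hgm : AEStronglyMeasurable g μ :=
    hg.def'.aestronglyMeasurable.mono_set (Ioo_subset_Ioc_self.trans Ioc_subset_uIoc)
  have hφm : AEStronglyMeasurable φ μ :=
    (continuousOn_Icc_of_eq_intervalIntegral hg hφ).mono Ioo_subset_Icc_self
      |>.aestronglyMeasurable measurableSet_Ioo
  calc ‖φ x‖ₑ ^ 2 = 2 * ‖∫ t in Ioc a x, g t * φ t‖ₑ := by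
        rw [← enorm_pow, hsq, intervalIntegral.integral_of_le hx.1, enorm_mul,
          Real.enorm_eq_ofReal zero_le_two, ENNReal.ofReal_ofNat]
    _ ≤ 2 * ∫⁻ t in Ioc a x, ‖g t * φ t‖ₑ := by
        gcongr
        exact enorm_integral_le_lintegral_enorm _
    _ ≤ 2 * ∫⁻ t, ‖g t * φ t‖ₑ ∂μ := by
        gcongr 1
        exact lintegral_mono_set'
          ((Ioc_subset_Ioc_right hx.2).eventuallyLE.trans Ioo_ae_eq_Ioc.symm.le)
    _ ≤ 2 * eLpNorm g 2 μ * eLpNorm φ 2 μ := by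
        rw [← eLpNorm_one_eq_lintegral_enorm, mul_assoc]
        gcongr
        simpa using eLpNorm_le_eLpNorm_mul_eLpNorm'_of_norm (p := 2) (q := 2) hgm hφm (· * ·) 1
          (ae_of_all _ fun t => by simp [norm_mul])

theorem gagliardo_nirenberg_1d (p : ℝ) (hp : 2 ≤ p) (φ g : ℝ → ℝ)
    (hg : Measurable g)
    (hgint : IntegrableOn (fun t => g t ^ 2) (Set.Ioo 0 1))
    (hφ : ∀ x ∈ Set.Icc (0:ℝ) 1, φ x = ∫ t in (0:ℝ)..x, g t) :
    eLpNorm φ (ENNReal.ofReal p) (volume.restrict (Set.Ioo (0:ℝ) 1))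
      ≤ ENNReal.ofReal (2 ^ ((1:ℝ)/2 - 1/p))
          * eLpNorm g 2 (volume.restrict (Set.Ioo (0:ℝ) 1)) ^ ((1:ℝ)/2 - 1/p)
          * eLpNorm φ 2 (volume.restrict (Set.Ioo (0:ℝ) 1)) ^ ((1:ℝ)/2 + 1/p) := by
  set μ := volume.restrict (Ioo (0:ℝ) 1)
  have hg01 : IntervalIntegrable g volume 0 1 := by
    rw [intervalIntegrable_iff_integrableOn_Ioo_of_le zero_le_one]
    exact ((memLp_two_iff_integrable_sq hg.aestronglyMeasurable).2 hgint).integrable one_le_two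
  have hφm : AEStronglyMeasurable φ μ :=
    (continuousOn_Icc_of_eq_intervalIntegral hg01 hφ).mono Ioo_subset_Icc_self
      |>.aestronglyMeasurable measurableSet_Ioo
  have hsup : ∀ᵐ x ∂μ, ‖φ x‖ₑ ≤ (2 * eLpNorm g 2 μ * eLpNorm φ 2 μ) ^ (2⁻¹ : ℝ) := by
    filter_upwards [ae_restrict_mem measurableSet_Ioo] with x hx
    rw [ENNReal.le_rpow_inv_iff two_pos, ENNReal.rpow_two]
    exact enorm_sq_le_two_mul_eLpNorm_mul_eLpNorm_of_eq_intervalIntegral hg01 hφ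
      (Ioo_subset_Icc_self hx)
  have hθ : (0:ℝ) ≤ 1/2 - 1/p := by
    have := one_div_le_one_div_of_le two_pos hp
    linarith
  calc eLpNorm φ (ENNReal.ofReal p) μ
      ≤ ((2 * eLpNorm g 2 μ * eLpNorm φ 2 μ) ^ (2⁻¹ : ℝ)) ^ (1 - 2 / p)
          * eLpNorm φ 2 μ ^ (2 / p) :=
        eLpNorm_le_rpow_mul_eLpNorm_two_rpow hφm hsup hp
    _ = _ := by
        rw [← ENNReal.rpow_mul, show (2⁻¹ : ℝ) * (1 - 2 / p) = 1/2 - 1/p by ring,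
          ENNReal.mul_rpow_of_nonneg _ _ hθ, ENNReal.mul_rpow_of_nonneg _ _ hθ,
          mul_assoc _ (eLpNorm φ 2 μ ^ _), ← ENNReal.rpow_add_of_nonneg _ _ hθ (by positivity),
          ← ENNReal.ofReal_rpow_of_nonneg zero_le_two hθ, ENNReal.ofReal_ofNat]
        congr 2; ring
end

section
/- Let s ∈ (1, ∞), let ω ⊆ ℝ² be a measurable set, let f : ω × ℝ² → [0, ∞) be measurable with velocity average ρ_f(y) = ∫_{ℝ²} f(y,v) dv, and let χ : ω × ℝ → ℂ be measurable such that for a.e. y ∈ ω the function z ↦ χ(y,z) lies in H¹₀(0,1) with derivative z ↦ g(y,z) and has unit L²(0,1)-norm: ∫₀¹ |χ(y,z)|² dz = 1. Then there is a constant C depending only on s such that ‖ρ_f(y)|χ(y,z)|²‖_{L^{(5s−3)/(3s−1)}(ω×(0,1))} ≤ C · ‖ρ_f‖_{L^{(2s−1)/s}(ω)}^{2(2s−1)/(5s−3)} · ( ∫_ω ρ_f(y) ( ∫₀¹ |g(y,z)|² dz ) dy )^{(s−1)/(5s−3)}, in the extended nonnegative reals. -/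
open MeasureTheory
open scoped ENNReal

/-- `φ` lies in `H¹₀(0,1)` with derivative `g` (complex-valued version). -/
def InH10C (φ g : ℝ → ℂ) : Prop :=
  Measurable g ∧ IntegrableOn (fun t => ‖g t‖ ^ 2) (Set.Ioo 0 1) ∧
    (∀ x ∈ Set.Icc (0:ℝ) 1, φ x = ∫ t in (0:ℝ)..x, g t) ∧ φ 1 = 0

/-! For `φ ∈ H¹₀(0,1)` with derivative `g`, `|φ(x)|² = -2 Re ∫ₓ¹ conj φ · g ≤ 2 ‖φ‖₂ ‖g‖₂`, so a
normalised `φ` satisfies `∫₀¹ |φ|^(2p) ≤ (sup |φ|²)^(p-1) ≤ 2^(p-1) ‖g‖₂^(p-1)`. Integrating this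
against `ρ^p` and applying Hölder to
`ρ^p G^((p-1)/2) = (ρ^((p+1)/(3-p)))^((3-p)/2) (ρ G)^((p-1)/2)`, where `G(y) = ‖g(y,·)‖₂²`,
gives the estimate with `p = (5s-3)/(3s-1)` and `C = 2`.

Nothing makes `G` measurable, so Hölder is applied to a measurable `G'` with `ρ G' ≤ ρ G` that
does not lower the integral of `ρ^p G^((p-1)/2)`. -/

open Set intervalIntegral

theorem sq_integral_sub_sq_integral_eq {u : ℝ → ℝ} {a b x : ℝ}
    (hu : IntervalIntegrable u volume a b) (hx : x ∈ Icc a b) :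
    (∫ t in a..b, u t) ^ 2 - (∫ t in a..x, u t) ^ 2
      = 2 * ∫ t in x..b, (∫ s in a..t, u s) * u t := by
  set F : ℝ → ℝ := fun y => ∫ s in a..y, u s
  have hsub : uIcc x b ⊆ uIcc a b := uIcc_subset_uIcc_right (mem_uIcc_of_le hx.1 hx.2)
  have hF : AbsolutelyContinuousOnInterval F x b :=
    (hu.absolutelyContinuousOnInterval_intervalIntegral left_mem_uIcc).mono hsub
  have hderiv : ∀ᵐ t, t ∈ uIoc x b → deriv F t * F t + F t * deriv F t = 2 * (F t * u t) := by
    filter_upwards [hu.ae_hasDerivAt_integral] with t ht htxb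
    rw [(ht (hsub (uIoc_subset_uIcc htxb)) a left_mem_uIcc).deriv]
    ring
  rw [← intervalIntegral.integral_const_mul, ← integral_congr_ae hderiv,
    hF.integral_deriv_mul_eq_sub hF]
  ring

theorem lintegral_rpow_le_of_ae_le {α : Type*} [MeasurableSpace α] {μ : Measure α}
    {F : α → ℝ≥0∞} {M : ℝ≥0∞} {p : ℝ} (hp : 1 ≤ p) (hM : M ≠ ∞) (hF : ∀ᵐ x ∂μ, F x ≤ M) :
    ∫⁻ x, F x ^ p ∂μ ≤ M ^ (p - 1) * ∫⁻ x, F x ∂μ := by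
  rw [← lintegral_const_mul' _ _ (ENNReal.rpow_ne_top_of_nonneg (by linarith) hM)]
  refine lintegral_mono_ae ?_
  filter_upwards [hF] with x hx
  calc F x ^ p = F x ^ (p - 1) * F x := by
        conv_lhs => rw [show p = (p - 1) + 1 by ring]
        rw [ENNReal.rpow_add_of_nonneg _ _ (by linarith) zero_le_one, ENNReal.rpow_one]
    _ ≤ M ^ (p - 1) * F x := by gcongr

namespace InH10C

variable {φ g : ℝ → ℂ}

theorem integrableOn_Icc (h : InH10C φ g) : IntegrableOn g (Icc 0 1) := by
  have hL2 : MemLp g 2 (volume.restrict (Ioo 0 1)) :=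
    (memLp_two_iff_integrable_sq_norm h.1.aestronglyMeasurable).2 h.2.1
  exact IntegrableOn.congr_set_ae (hL2.integrable one_le_two) Ioo_ae_eq_Icc.symm

theorem intervalIntegrable (h : InH10C φ g) : IntervalIntegrable g volume 0 1 :=
  (intervalIntegrable_iff_integrableOn_Icc_of_le zero_le_one).2 h.integrableOn_Icc

theorem continuousOn (h : InH10C φ g) : ContinuousOn φ (Icc 0 1) := by
  have := continuousOn_primitive_interval (μ := volume) (a := 0) (b := 1) (f := g)
    (by simpa [uIcc_of_le zero_le_one] using h.integrableOn_Icc)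
  rw [uIcc_of_le zero_le_one] at this
  exact this.congr h.2.2.1

theorem intervalIntegrable_of_mem (h : InH10C φ g) {a b : ℝ} (ha : a ∈ Icc 0 1)
    (hb : b ∈ Icc 0 1) : IntervalIntegrable g volume a b :=
  h.intervalIntegrable.mono_set
    (uIcc_subset_uIcc (mem_uIcc_of_le ha.1 ha.2) (mem_uIcc_of_le hb.1 hb.2))

theorem apply_eq_integral (h : InH10C φ g) (L : ℂ →L[ℝ] ℝ) {x : ℝ} (hx : x ∈ Icc 0 1) :
    L (φ x) = ∫ t in 0..x, L (g t) := by
  rw [h.2.2.1 x hx, L.intervalIntegral_comp_comm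
    (h.intervalIntegrable_of_mem (left_mem_Icc.2 zero_le_one) hx)]

theorem sq_apply_eq (h : InH10C φ g) (L : ℂ →L[ℝ] ℝ) {x : ℝ} (hx : x ∈ Icc 0 1) :
    L (φ x) ^ 2 = -(2 * ∫ t in x..1, L (φ t) * L (g t)) := by
  have hLg : IntervalIntegrable (fun t => L (g t)) volume 0 1 :=
    ⟨L.integrable_comp h.intervalIntegrable.1, L.integrable_comp h.intervalIntegrable.2⟩
  have hprim : ∫ t in x..1, (∫ s in 0..t, L (g s)) * L (g t)
      = ∫ t in x..1, L (φ t) * L (g t) := by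
    refine integral_congr fun t ht => ?_
    rw [uIcc_of_le hx.2] at ht
    rw [h.apply_eq_integral L ⟨hx.1.trans ht.1, ht.2⟩]
  have key := sq_integral_sub_sq_integral_eq hLg hx
  rw [← h.apply_eq_integral L hx, ← h.apply_eq_integral L (right_mem_Icc.2 zero_le_one),
    h.2.2.2, map_zero, hprim] at key
  linarith

theorem sq_norm_le_two_mul_integral (h : InH10C φ g) {x : ℝ} (hx : x ∈ Icc 0 1) :
    ‖φ x‖ ^ 2 ≤ 2 * ∫ t in 0..1, ‖φ t‖ * ‖g t‖ := by
  have hφ := h.continuousOn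
  have hint : ∀ L : ℂ →L[ℝ] ℝ, IntervalIntegrable (fun t => L (φ t) * L (g t)) volume x 1 := by
    intro L
    have hg := h.intervalIntegrable_of_mem hx (right_mem_Icc.2 zero_le_one)
    refine IntervalIntegrable.continuousOn_mul ⟨L.integrable_comp hg.1, L.integrable_comp hg.2⟩
      (L.continuous.comp_continuousOn (hφ.mono ?_))
    rw [uIcc_of_le hx.2]; exact Icc_subset_Icc_left hx.1
  have hnorm : IntervalIntegrable (fun t => ‖φ t‖ * ‖g t‖) volume 0 1 :=
    h.intervalIntegrable.norm.continuousOn_mul (by rw [uIcc_of_le zero_le_one]; exact hφ.norm)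
  have hinner : ∀ t, -(Complex.reCLM (φ t) * Complex.reCLM (g t)
      + Complex.imCLM (φ t) * Complex.imCLM (g t)) ≤ ‖φ t‖ * ‖g t‖ := fun t => by
    have hCS := (abs_le.1 (abs_real_inner_le_norm (φ t) (g t))).1
    rw [Complex.inner] at hCS
    simp only [Complex.mul_re, Complex.conj_re, Complex.conj_im] at hCS
    simp only [Complex.reCLM_apply, Complex.imCLM_apply]
    linarith
  calc ‖φ x‖ ^ 2 = Complex.reCLM (φ x) ^ 2 + Complex.imCLM (φ x) ^ 2 := by
        rw [Complex.sq_norm, Complex.normSq_apply]; simp [sq]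
    _ = 2 * ∫ t in x..1, -(Complex.reCLM (φ t) * Complex.reCLM (g t)
          + Complex.imCLM (φ t) * Complex.imCLM (g t)) := by
        rw [h.sq_apply_eq _ hx, h.sq_apply_eq _ hx, intervalIntegral.integral_neg,
          intervalIntegral.integral_add (hint _) (hint _)]
        ring
    _ ≤ 2 * ∫ t in x..1, ‖φ t‖ * ‖g t‖ := by
        gcongr
        exact intervalIntegral.integral_mono hx.2 ((hint _).add (hint _)).neg
          (hnorm.mono_set (uIcc_subset_uIcc (mem_uIcc_of_le hx.1 hx.2) right_mem_uIcc)) hinner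
    _ ≤ 2 * ∫ t in 0..1, ‖φ t‖ * ‖g t‖ := by
        gcongr
        exact intervalIntegral.integral_mono_interval hx.1 hx.2 le_rfl
          (Filter.Eventually.of_forall fun t => by positivity) hnorm

theorem integrableOn_sq_norm (h : InH10C φ g) : IntegrableOn (fun t => ‖φ t‖ ^ 2) (Ioo 0 1) :=
  ((h.continuousOn.norm.pow 2).integrableOn_Icc).mono_set Ioo_subset_Icc_self

theorem sq_norm_le_two_mul_rpow_mul_rpow (h : InH10C φ g) {x : ℝ} (hx : x ∈ Icc 0 1) :
    ‖φ x‖ ^ 2 ≤ 2 * (∫ t in Ioo 0 1, ‖φ t‖ ^ 2) ^ (1 / 2 : ℝ)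
      * (∫ t in Ioo 0 1, ‖g t‖ ^ 2) ^ (1 / 2 : ℝ) := by
  have hφ : MemLp φ 2 (volume.restrict (Ioo 0 1)) :=
    (memLp_two_iff_integrable_sq_norm
      ((h.continuousOn.mono Ioo_subset_Icc_self).aestronglyMeasurable measurableSet_Ioo)).2
      h.integrableOn_sq_norm
  have hg : MemLp g 2 (volume.restrict (Ioo 0 1)) :=
    (memLp_two_iff_integrable_sq_norm h.1.aestronglyMeasurable).2 h.2.1
  have hCS := integral_mul_le_Lp_mul_Lq_of_nonneg Real.HolderConjugate.two_two
    (Filter.Eventually.of_forall fun t => norm_nonneg (φ t))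
    (Filter.Eventually.of_forall fun t => norm_nonneg (g t))
    (by simpa using hφ.norm) (by simpa using hg.norm)
  simp only [Real.rpow_two] at hCS
  have := h.sq_norm_le_two_mul_integral hx
  rw [intervalIntegral.integral_of_le zero_le_one, integral_Ioc_eq_integral_Ioo] at this
  linarith

theorem lintegral_sq_norm_rpow_le (h : InH10C φ g)
    (hnorm : ∫ z in Ioo (0:ℝ) 1, ‖φ z‖ ^ 2 = 1) {p : ℝ} (hp : 1 ≤ p) :
    ∫⁻ z in Ioo (0:ℝ) 1, ENNReal.ofReal (‖φ z‖ ^ 2) ^ p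
      ≤ 2 ^ (p - 1) * (∫⁻ z in Ioo (0:ℝ) 1, ENNReal.ofReal (‖g z‖ ^ 2)) ^ ((p - 1) / 2) := by
  set G := ∫ z in Ioo (0:ℝ) 1, ‖g z‖ ^ 2
  have hG : ∫⁻ z in Ioo (0:ℝ) 1, ENNReal.ofReal (‖g z‖ ^ 2) = ENNReal.ofReal G :=
    (ofReal_integral_eq_lintegral_ofReal h.2.1
      (Filter.Eventually.of_forall fun _ => by positivity)).symm
  have hφ : ∫⁻ z in Ioo (0:ℝ) 1, ENNReal.ofReal (‖φ z‖ ^ 2) = 1 := by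
    rw [← ofReal_integral_eq_lintegral_ofReal h.integrableOn_sq_norm
      (Filter.Eventually.of_forall fun _ => by positivity), hnorm, ENNReal.ofReal_one]
  have hsup : ∀ᵐ z ∂(volume.restrict (Ioo (0:ℝ) 1)),
      ENNReal.ofReal (‖φ z‖ ^ 2) ≤ 2 * ENNReal.ofReal G ^ (1 / 2 : ℝ) := by
    filter_upwards [ae_restrict_mem measurableSet_Ioo] with z hz
    have := h.sq_norm_le_two_mul_rpow_mul_rpow (Ioo_subset_Icc_self hz)
    rw [hnorm, Real.one_rpow, mul_one] at this
    rw [ENNReal.ofReal_rpow_of_nonneg (integral_nonneg fun _ => by positivity) (by norm_num)]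
    rw [← ENNReal.ofReal_ofNat 2, ← ENNReal.ofReal_mul zero_le_two]
    exact ENNReal.ofReal_le_ofReal this
  calc ∫⁻ z in Ioo (0:ℝ) 1, ENNReal.ofReal (‖φ z‖ ^ 2) ^ p
      ≤ (2 * ENNReal.ofReal G ^ (1 / 2 : ℝ)) ^ (p - 1) * 1 := by
        rw [← hφ]
        exact lintegral_rpow_le_of_ae_le hp (by finiteness) hsup
    _ = 2 ^ (p - 1) * (∫⁻ z in Ioo (0:ℝ) 1, ENNReal.ofReal (‖g z‖ ^ 2)) ^ ((p - 1) / 2) := by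
        rw [hG, mul_one, ENNReal.mul_rpow_of_nonneg _ _ (by linarith), ← ENNReal.rpow_mul]
        ring_nf

end InH10C

theorem exists_measurable_mul_le_lintegral_rpow_mul_rpow_le {α : Type*} [MeasurableSpace α]
    (μ : Measure α) {ρ : α → ℝ≥0∞} (hρ : Measurable ρ) (G : α → ℝ≥0∞) {a b : ℝ}
    (ha : 0 < a) (hb : 0 < b) :
    ∃ G' : α → ℝ≥0∞, Measurable G' ∧ (∀ y, ρ y * G' y ≤ ρ y * G y) ∧
      ∫⁻ y, ρ y ^ a * G y ^ b ∂μ ≤ ∫⁻ y, ρ y ^ a * G' y ^ b ∂μ := by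
  obtain ⟨w, hwm, hwle, hweq⟩ := exists_measurable_le_lintegral_eq μ (fun y => ρ y ^ a * G y ^ b)
  -- Where `ρ = ∞`, `ρ * G = ∞` as soon as `G ≠ 0`, so `G'` may be `∞` there.
  let G' : α → ℝ≥0∞ := fun y => if ρ y = ∞ then ∞ * w y else (w y / ρ y ^ a) ^ b⁻¹
  have hw0 : ∀ y, w y ≠ 0 → ρ y ≠ 0 ∧ G y ≠ 0 := by
    intro y hy
    constructor <;> rintro h0 <;> apply hy <;> simpa [h0, ha, hb] using hwle y
  refine ⟨G', ?_, fun y => ?_, hweq ▸ lintegral_mono fun y => ?_⟩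
  · exact Measurable.ite (hρ (measurableSet_singleton ∞)) (measurable_const.mul hwm)
      ((hwm.div (hρ.pow_const a)).pow_const _)
  · by_cases hw : w y = 0
    · simp [G', hw, ENNReal.zero_rpow_of_pos (inv_pos.2 hb)]
    obtain ⟨hρ0, hG0⟩ := hw0 y hw
    by_cases hρt : ρ y = ∞
    · simp [hρt, hG0]
    gcongr
    simp only [G', hρt, if_false]
    calc (w y / ρ y ^ a) ^ b⁻¹ ≤ (G y ^ b) ^ b⁻¹ := by
          gcongr
          exact ENNReal.div_le_of_le_mul (by rw [mul_comm]; exact hwle y)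
      _ = G y := ENNReal.rpow_rpow_inv hb.ne' _
  · by_cases hw : w y = 0
    · simp [hw]
    obtain ⟨hρ0, -⟩ := hw0 y hw
    by_cases hρt : ρ y = ∞
    · simp [G', hρt, hw, ha, hb]
    simp only [G', hρt, if_false, ENNReal.rpow_inv_rpow hb.ne']
    rw [ENNReal.mul_div_cancel (by simp [hρ0, ha.le]) (by simp [hρt, hρ0])]

theorem lintegral_rpow_mul_rpow_le {α : Type*} [MeasurableSpace α] {μ : Measure α}
    {ρ : α → ℝ≥0∞} (hρ : Measurable ρ) (G : α → ℝ≥0∞) {p : ℝ} (hp1 : 1 < p) (hp3 : p < 3) :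
    ∫⁻ y, ρ y ^ p * G y ^ ((p - 1) / 2) ∂μ
      ≤ (∫⁻ y, ρ y ^ ((p + 1) / (3 - p)) ∂μ) ^ ((3 - p) / 2)
        * (∫⁻ y, ρ y * G y ∂μ) ^ ((p - 1) / 2) := by
  obtain ⟨G', hG'm, hG'le, hG'⟩ := exists_measurable_mul_le_lintegral_rpow_mul_rpow_le μ hρ G
    (by linarith) (by linarith : 0 < (p - 1) / 2)
  have hsplit : ∀ y, ρ y ^ p * G' y ^ ((p - 1) / 2)
      = (ρ y ^ ((p + 1) / (3 - p))) ^ ((3 - p) / 2) * (ρ y * G' y) ^ ((p - 1) / 2) := by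
    intro y
    rw [ENNReal.mul_rpow_of_nonneg _ _ (by linarith), ← ENNReal.rpow_mul, ← mul_assoc,
      ← ENNReal.rpow_add_of_nonneg _ _ (by positivity) (by linarith)]
    congr 2
    field_simp [(by linarith : 3 - p ≠ 0)]
    ring
  calc ∫⁻ y, ρ y ^ p * G y ^ ((p - 1) / 2) ∂μ ≤ ∫⁻ y, ρ y ^ p * G' y ^ ((p - 1) / 2) ∂μ := hG'
    _ = ∫⁻ y, (ρ y ^ ((p + 1) / (3 - p))) ^ ((3 - p) / 2) * (ρ y * G' y) ^ ((p - 1) / 2) ∂μ :=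
        lintegral_congr hsplit
    _ ≤ (∫⁻ y, ρ y ^ ((p + 1) / (3 - p)) ∂μ) ^ ((3 - p) / 2)
        * (∫⁻ y, ρ y * G' y ∂μ) ^ ((p - 1) / 2) :=
        ENNReal.lintegral_mul_norm_pow_le (hρ.pow_const _).aemeasurable
          (hρ.mul hG'm).aemeasurable (by linarith) (by linarith) (by ring)
    _ ≤ _ := by gcongr _ * (∫⁻ y, ?_ ∂μ) ^ _ with y; exact hG'le y

theorem lintegral_prod_mul_sq_norm_rpow_le {α : Type*} [MeasurableSpace α] {μ : Measure α}
    [SFinite μ] {ρ : α → ℝ≥0∞} (hρ : Measurable ρ) {χ g : α → ℝ → ℂ}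
    (hχ : Measurable (Function.uncurry χ))
    (h : ∀ᵐ y ∂μ, InH10C (χ y) (g y) ∧ ∫ z in Ioo (0:ℝ) 1, ‖χ y z‖ ^ 2 = 1)
    {p : ℝ} (hp1 : 1 < p) (hp3 : p < 3) :
    ∫⁻ q, (ρ q.1 * ENNReal.ofReal (‖χ q.1 q.2‖ ^ 2)) ^ p ∂(μ.prod (volume.restrict (Ioo 0 1)))
      ≤ 2 ^ (p - 1) * ((∫⁻ y, ρ y ^ ((p + 1) / (3 - p)) ∂μ) ^ ((3 - p) / 2)
        * (∫⁻ y, ρ y * (∫⁻ z in Ioo (0:ℝ) 1, ENNReal.ofReal (‖g y z‖ ^ 2)) ∂μ)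
          ^ ((p - 1) / 2)) := by
  have hX : Measurable fun q : α × ℝ => ENNReal.ofReal (‖χ q.1 q.2‖ ^ 2) :=
    (hχ.norm.pow_const 2).ennreal_ofReal
  have hF : Measurable fun q : α × ℝ => (ρ q.1 * ENNReal.ofReal (‖χ q.1 q.2‖ ^ 2)) ^ p :=
    ((hρ.comp measurable_fst).mul hX).pow_const p
  rw [lintegral_prod _ hF.aemeasurable]
  calc ∫⁻ y, ∫⁻ z, (ρ y * ENNReal.ofReal (‖χ y z‖ ^ 2)) ^ p ∂volume.restrict (Ioo 0 1) ∂μ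
      = ∫⁻ y, ρ y ^ p * (∫⁻ z in Ioo (0:ℝ) 1, ENNReal.ofReal (‖χ y z‖ ^ 2) ^ p) ∂μ := by
        refine lintegral_congr fun y => ?_
        simp_rw [ENNReal.mul_rpow_of_nonneg _ _ (by linarith : 0 ≤ p)]
        exact lintegral_const_mul _ ((hX.comp measurable_prodMk_left).pow_const p)
    _ ≤ ∫⁻ y, 2 ^ (p - 1) * (ρ y ^ p
          * (∫⁻ z in Ioo (0:ℝ) 1, ENNReal.ofReal (‖g y z‖ ^ 2)) ^ ((p - 1) / 2)) ∂μ := by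
        refine lintegral_mono_ae ?_
        filter_upwards [h] with y ⟨hy, hnorm⟩
        rw [mul_left_comm]
        gcongr
        exact hy.lintegral_sq_norm_rpow_le hnorm hp1.le
    _ ≤ _ := by
        rw [lintegral_const_mul' _ _ (by finiteness)]
        gcongr
        exact lintegral_rpow_mul_rpow_le hρ _ hp1 hp3

theorem lintegral_prod_mul_sq_norm_rpow_rpow_le {α : Type*} [MeasurableSpace α] {μ : Measure α}
    [SFinite μ] {ρ : α → ℝ≥0∞} (hρ : Measurable ρ) {χ g : α → ℝ → ℂ}
    (hχ : Measurable (Function.uncurry χ))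
    (h : ∀ᵐ y ∂μ, InH10C (χ y) (g y) ∧ ∫ z in Ioo (0:ℝ) 1, ‖χ y z‖ ^ 2 = 1)
    {p : ℝ} (hp1 : 1 < p) (hp3 : p < 3) :
    (∫⁻ q, (ρ q.1 * ENNReal.ofReal (‖χ q.1 q.2‖ ^ 2)) ^ p ∂(μ.prod (volume.restrict (Ioo 0 1))))
        ^ (1 / p)
      ≤ 2 * (∫⁻ y, ρ y ^ ((p + 1) / (3 - p)) ∂μ) ^ ((3 - p) / (2 * p))
        * (∫⁻ y, ρ y * (∫⁻ z in Ioo (0:ℝ) 1, ENNReal.ofReal (‖g y z‖ ^ 2)) ∂μ)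
          ^ ((p - 1) / (2 * p)) := by
  have hp : 0 ≤ 1 / p := by positivity
  have htwo : (2 : ℝ≥0∞) ^ ((p - 1) * (1 / p)) ≤ 2 := by
    conv_rhs => rw [← ENNReal.rpow_one 2]
    exact ENNReal.rpow_le_rpow_of_exponent_le one_le_two
      (by rw [mul_one_div, div_le_one (by linarith)]; linarith)
  calc _ ≤ (2 ^ (p - 1) * ((∫⁻ y, ρ y ^ ((p + 1) / (3 - p)) ∂μ) ^ ((3 - p) / 2)
        * (∫⁻ y, ρ y * (∫⁻ z in Ioo (0:ℝ) 1, ENNReal.ofReal (‖g y z‖ ^ 2)) ∂μ) ^ ((p - 1) / 2)))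
          ^ (1 / p) := by
        gcongr
        exact lintegral_prod_mul_sq_norm_rpow_le hρ hχ h hp1 hp3
    _ = 2 ^ ((p - 1) * (1 / p)) * ((∫⁻ y, ρ y ^ ((p + 1) / (3 - p)) ∂μ) ^ ((3 - p) / (2 * p))
        * (∫⁻ y, ρ y * (∫⁻ z in Ioo (0:ℝ) 1, ENNReal.ofReal (‖g y z‖ ^ 2)) ∂μ)
          ^ ((p - 1) / (2 * p))) := by
        rw [ENNReal.mul_rpow_of_nonneg _ _ hp, ENNReal.mul_rpow_of_nonneg _ _ hp,
          ← ENNReal.rpow_mul, ← ENNReal.rpow_mul, ← ENNReal.rpow_mul]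
        ring_nf
    _ ≤ _ := by
        rw [← mul_assoc]
        gcongr

theorem single_subband_density_estimate (s : ℝ) (hs : 1 < s) :
    ∃ C : ℝ≥0∞, C ≠ ⊤ ∧
      ∀ (ω : Set Plane), MeasurableSet ω →
        ∀ (f : Plane → Plane → ℝ), Measurable (Function.uncurry f) → (∀ y v, 0 ≤ f y v) →
          ∀ (χ g : Plane → ℝ → ℂ), Measurable (Function.uncurry χ) →
            (∀ᵐ y ∂(volume.restrict ω), InH10C (χ y) (g y) ∧
              (∫ z in Set.Ioo (0:ℝ) 1, ‖χ y z‖ ^ 2) = 1) →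
            (∫⁻ q in ω ×ˢ Set.Ioo (0:ℝ) 1,
                ((∫⁻ v, ENNReal.ofReal (f q.1 v))
                  * ENNReal.ofReal (‖χ q.1 q.2‖ ^ 2)) ^ ((5*s - 3)/(3*s - 1)))
              ^ ((3*s - 1)/(5*s - 3))
            ≤ C * ((∫⁻ y in ω, (∫⁻ v, ENNReal.ofReal (f y v)) ^ ((2*s - 1)/s))
                      ^ (s/(2*s - 1))) ^ (2*(2*s - 1)/(5*s - 3))
                * (∫⁻ y in ω, (∫⁻ v, ENNReal.ofReal (f y v))
                      * ∫⁻ z in Set.Ioo (0:ℝ) 1, ENNReal.ofReal (‖g y z‖ ^ 2))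
                      ^ ((s - 1)/(5*s - 3)) := by
  set p := (5 * s - 3) / (3 * s - 1)
  have h31 : 0 < 3 * s - 1 := by linarith
  have hp : p * (3 * s - 1) = 5 * s - 3 := div_mul_cancel₀ _ h31.ne'
  have hp1 : 1 < p := (one_lt_div h31).2 (by linarith)
  have hp3 : p < 3 := (div_lt_iff₀ h31).2 (by linarith)
  have e₀ : (3 * s - 1) / (5 * s - 3) = 1 / p := (one_div_div _ _).symm
  have e₁ : (2 * s - 1) / s = (p + 1) / (3 - p) := by
    rw [div_eq_div_iff (by linarith) (by linarith)]
    linear_combination -hp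
  have e₂ : s / (2 * s - 1) * (2 * (2 * s - 1) / (5 * s - 3)) = (3 - p) / (2 * p) := by
    rw [div_mul_div_comm, div_eq_div_iff (mul_ne_zero (by linarith) (by linarith)) (by linarith)]
    linear_combination 3 * (2 * s - 1) * hp
  have e₃ : (s - 1) / (5 * s - 3) = (p - 1) / (2 * p) := by
    rw [div_eq_div_iff (by linarith) (by linarith)]
    linear_combination -hp
  refine ⟨2, ENNReal.ofNat_ne_top, fun ω _ f hf _ χ g hχ h => ?_⟩
  rw [Measure.volume_eq_prod, ← Measure.prod_restrict, e₀, ← ENNReal.rpow_mul, e₁, e₂, e₃]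
  exact lintegral_prod_mul_sq_norm_rpow_rpow_le hf.ennreal_ofReal.lintegral_prod_right' hχ h hp1 hp3
end
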